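/- arXiv:2109.07025 — 2 statements merged into one kernel-verified Lean document; each statement's English description precedes it below -/
import Mathlib

section
/- For any φ ∈ ℝ³ with φ = φ·u, u a unit vector, the matrix exponential of φ^∧ equals I + sin(φ) u^∧ + (1 - cos(φ)) u^∧ u^∧ (Rodrigues' formula). -/
open Matrix

noncomputable def hat (v : Fin 3 → ℝ) : Matrix (Fin 3) (Fin 3) ℝ :=
  !![0, -v 2, v 1; v 2, 0, -v 0; -v 1, v 0, 0]

attribute [local instance] Matrix.linftyOpSemiNormedRing Matrix.linftyOpNormedRing
  Matrix.linftyOpNormedAlgebra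

lemma cube_aux (a b c : ℝ) (h : a * a + b * b + c * c = 1) :
    (!![0, -c, b; c, 0, -a; -b, a, 0] : Matrix (Fin 3) (Fin 3) ℝ) *
      (!![0, -c, b; c, 0, -a; -b, a, 0] * !![0, -c, b; c, 0, -a; -b, a, 0]) =
      -!![0, -c, b; c, 0, -a; -b, a, 0] := by
  ext i j
  fin_cases i <;> fin_cases j <;>
    simp [Matrix.mul_apply, Fin.sum_univ_three] <;>
    first
      | ring1
      | linear_combination c * h
      | linear_combination (-b) * h
      | linear_combination (-c) * h
      | linear_combination a * h
      | linear_combination b * h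
      | linear_combination (-a) * h

theorem rodrigues (φ : ℝ) (u : Fin 3 → ℝ) (hu : u ⬝ᵥ u = 1) :
    NormedSpace.exp (hat (φ • u)) =
      1 + Real.sin φ • hat u + (1 - Real.cos φ) • (hat u * hat u) := by
  have hu' : u 0 * u 0 + u 1 * u 1 + u 2 * u 2 = 1 := by
    simpa [dotProduct, Fin.sum_univ_three] using hu
  set K := hat u with hK
  have hK3 : K * (K * K) = -K := by
    have e : hat u = !![0, -u 2, u 1; u 2, 0, -u 0; -u 1, u 0, 0] := rfl
    rw [hK, e]
    exact cube_aux (u 0) (u 1) (u 2) hu'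
  have hsm : hat (φ • u) = φ • K := by
    ext i j
    fin_cases i <;> fin_cases j <;> simp [hat, hK] <;> ring
  set g : ℝ → Matrix (Fin 3) (Fin 3) ℝ :=
    fun t => 1 + Real.sin t • K + (1 - Real.cos t) • (K * K) with hg
  have hgd : ∀ t, HasDerivAt g (K * g t) t := by
    intro t
    have h1 : HasDerivAt (fun t => Real.sin t • K) (Real.cos t • K) t :=
      (Real.hasDerivAt_sin t).smul_const K
    have h2 : HasDerivAt (fun t => (1 - Real.cos t) • (K * K)) (Real.sin t • (K * K)) t := by
      have h := ((hasDerivAt_const t (1:ℝ)).sub (Real.hasDerivAt_cos t)).smul_const (K * K)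
      simp at h
      exact h
    have h3 := ((hasDerivAt_const t ((1 : Matrix (Fin 3) (Fin 3) ℝ))).add h1).add h2
    refine h3.congr_deriv ?_
    rw [hg]
    simp only [mul_add, mul_one, Matrix.mul_smul, hK3]
    rw [smul_neg, sub_smul, one_smul, zero_add]
    abel
  have hEneg : ∀ t : ℝ, HasDerivAt (fun s : ℝ => NormedSpace.exp ((-s) • K))
      (-(NormedSpace.exp ((-t) • K) * K)) t := by
    intro t
    have h := (hasDerivAt_exp_smul_const (𝕂 := ℝ) K (-t)).scomp t (hasDerivAt_neg t)
    have h2 : HasDerivAt (fun s : ℝ => NormedSpace.exp ((-s) • K))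
        ((-1 : ℝ) • (NormedSpace.exp ((-t) • K) * K)) t := h
    simpa using h2
  have hFd : ∀ t : ℝ, HasDerivAt (fun s : ℝ => NormedSpace.exp ((-s) • K) * g s)
      (0 : Matrix (Fin 3) (Fin 3) ℝ) t := by
    intro t
    have h := (hEneg t).mul (hgd t)
    refine h.congr_deriv ?_
    rw [neg_mul, mul_assoc]
    abel
  have hconst : ∀ t : ℝ, NormedSpace.exp ((-t) • K) * g t =
      NormedSpace.exp ((-(0:ℝ)) • K) * g 0 := by
    intro t
    exact is_const_of_deriv_eq_zero (fun s => (hFd s).differentiableAt)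
      (fun s => (hFd s).deriv) t 0
  have hg0 : g 0 = 1 := by simp [hg]
  have hF : NormedSpace.exp ((-φ) • K) * g φ = 1 := by
    rw [hconst φ, hg0, mul_one]
    norm_num
  have hcomm : Commute (φ • K) ((-φ) • K) := by
    simpa [neg_smul] using (Commute.refl (φ • K)).neg_right
  have hinv : NormedSpace.exp (φ • K) * NormedSpace.exp ((-φ) • K) = 1 := by
    have h := NormedSpace.exp_add_of_commute hcomm
    rw [← add_smul, add_neg_cancel, zero_smul, NormedSpace.exp_zero] at h
    exact h.symm
  calc NormedSpace.exp (hat (φ • u)) = NormedSpace.exp (φ • K) * 1 := by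
        rw [hsm, mul_one]
    _ = NormedSpace.exp (φ • K) * (NormedSpace.exp ((-φ) • K) * g φ) := by rw [hF]
    _ = (NormedSpace.exp (φ • K) * NormedSpace.exp ((-φ) • K)) * g φ := by
        rw [mul_assoc]
    _ = g φ := by rw [hinv, one_mul]
end

section
/- The left Jacobian of SO(3), J_l(φ) = I + ((1 - cos φ)/φ) u^∧ + ((φ - sin φ)/φ) u^∧ u^∧ with φ = φ u and u a unit vector, equals the integral ∫₀¹ exp(α φ^∧) dα. -/
open Matrix

lemma hat_cube (u : Fin 3 → ℝ) (hu : u ⬝ᵥ u = 1) : hat u * hat u * hat u = -(hat u) := by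
  have h : u 0 * u 0 + u 1 * u 1 + u 2 * u 2 = 1 := by
    simpa [dotProduct, Fin.sum_univ_three] using hu
  ext i j
  fin_cases i <;> fin_cases j <;>
    (simp [hat, Matrix.mul_apply, Fin.sum_univ_three]
     try first
       | linear_combination (u 0) * h | linear_combination (-u 0) * h
       | linear_combination (u 1) * h | linear_combination (-u 1) * h
       | linear_combination (u 2) * h | linear_combination (-u 2) * h | ring)

lemma hat_smul (c : ℝ) (u : Fin 3 → ℝ) : hat (c • u) = c • hat u := by
  ext i j
  fin_cases i <;> fin_cases j <;> simp [hat]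

section Rodrigues

attribute [local instance] Matrix.linftyOpNormedAddCommGroup Matrix.linftyOpNormedRing
  Matrix.linftyOpNormedAlgebra

open NormedSpace in
lemma rodrigues_s8 (A : Matrix (Fin 3) (Fin 3) ℝ) (h3 : A * A * A = -A) (x : ℝ) :
    exp (x • A) = 1 + Real.sin x • A + (1 - Real.cos x) • (A * A) := by
  set R : ℝ → Matrix (Fin 3) (Fin 3) ℝ :=
    fun t => 1 + Real.sin t • A + (1 - Real.cos t) • (A * A) with hR
  set F : ℝ → Matrix (Fin 3) (Fin 3) ℝ := fun t => R t * exp (t • (-A)) with hF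
  have hcomm : ∀ t : ℝ, exp (t • (-A)) * A = A * exp (t • (-A)) := by
    intro t
    have : Commute A (t • (-A)) := (Commute.refl A).neg_right.smul_right t
    exact (this.exp_right).symm
  have hFd : ∀ t : ℝ, HasDerivAt F 0 t := by
    intro t
    have hRd : HasDerivAt R (Real.cos t • A + Real.sin t • (A * A)) t := by
      have h1 : HasDerivAt (fun t : ℝ => Real.sin t • A) (Real.cos t • A) t :=
        (Real.hasDerivAt_sin t).smul_const A
      have h2 : HasDerivAt (fun t : ℝ => (1 - Real.cos t) • (A * A))
          (Real.sin t • (A * A)) t := by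
        have h2' := ((hasDerivAt_const t (1:ℝ)).sub (Real.hasDerivAt_cos t)).smul_const (A * A)
        simp at h2'
        exact h2'
      have hR' := ((hasDerivAt_const t (1 : Matrix (Fin 3) (Fin 3) ℝ)).add h1).add h2
      rw [zero_add] at hR'
      exact hR'
    have hEd : HasDerivAt (fun s : ℝ => exp (s • (-A))) (exp (t • (-A)) * (-A)) t :=
      hasDerivAt_exp_smul_const (-A) t
    have := hRd.mul hEd
    refine this.congr_deriv ?_
    have expand : R t * (exp (t • (-A)) * (-A)) =
        -(R t * A) * exp (t • (-A)) := by
      rw [mul_neg, mul_neg, hcomm t, ← mul_assoc, neg_mul]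
    have hRA : R t * A = Real.cos t • A + Real.sin t • (A * A) := by
      rw [hR]
      simp only [add_mul, one_mul, smul_mul_assoc, mul_assoc]
      rw [← mul_assoc A A A, h3]
      module
    rw [expand, hRA, neg_mul, add_neg_cancel]
  have hconst : ∀ t : ℝ, F t = F 0 := by
    intro t
    exact is_const_of_deriv_eq_zero (fun s => (hFd s).differentiableAt)
      (fun s => (hFd s).deriv) t 0
  have hF0 : F 0 = 1 := by
    simp [hF, hR]
  have hinv : exp (x • (-A)) * exp (x • A) = 1 := by
    rw [← Matrix.exp_add_of_commute]
    · simp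
    · exact ((Commute.refl A).neg_left.smul_left x).smul_right x
  have := hconst x
  rw [hF0] at this
  have key : R x = exp (x • A) :=
    calc R x = R x * (exp (x • (-A)) * exp (x • A)) := by rw [hinv, mul_one]
      _ = F x * exp (x • A) := by rw [hF, mul_assoc]
      _ = exp (x • A) := by rw [this, one_mul]
  exact key.symm

end Rodrigues

theorem leftJacobian_eq_integral (φ : ℝ) (hφ : 0 < φ) (u : Fin 3 → ℝ) (hu : u ⬝ᵥ u = 1) :
    (1 : Matrix (Fin 3) (Fin 3) ℝ) + ((1 - Real.cos φ) / φ) • hat u +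
        ((φ - Real.sin φ) / φ) • (hat u * hat u) =
      Matrix.of fun i j => ∫ α in (0:ℝ)..1, (NormedSpace.exp (α • hat (φ • u))) i j := by
  have h3 := hat_cube u hu
  have hφ' : φ ≠ 0 := ne_of_gt hφ
  ext i j
  simp only [Matrix.of_apply]
  have hent : ∀ α : ℝ, (NormedSpace.exp (α • hat (φ • u))) i j =
      (1 : Matrix (Fin 3) (Fin 3) ℝ) i j + Real.sin (α * φ) * (hat u) i j +
        (1 - Real.cos (α * φ)) * (hat u * hat u) i j := by
    intro α
    rw [hat_smul, smul_smul, rodrigues_s8 (hat u) h3 (α * φ)]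
    simp [Matrix.add_apply, Matrix.smul_apply, smul_eq_mul]
  simp_rw [hent]
  have c1 : Continuous fun α : ℝ => Real.sin (α * φ) * (hat u) i j := by fun_prop
  have c2 : Continuous fun α : ℝ => (1 - Real.cos (α * φ)) * (hat u * hat u) i j := by fun_prop
  rw [intervalIntegral.integral_add
      ((intervalIntegrable_const).add (c1.intervalIntegrable _ _)) (c2.intervalIntegrable _ _),
    intervalIntegral.integral_add intervalIntegrable_const (c1.intervalIntegrable _ _),
    intervalIntegral.integral_const, intervalIntegral.integral_mul_const,
    intervalIntegral.integral_mul_const]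
  have hsin : (∫ α in (0:ℝ)..1, Real.sin (α * φ)) = (1 - Real.cos φ) / φ := by
    rw [intervalIntegral.integral_comp_mul_right Real.sin hφ']
    simp [integral_sin, smul_eq_mul]
    ring
  have hcos : (∫ α in (0:ℝ)..1, (1 - Real.cos (α * φ))) = (φ - Real.sin φ) / φ := by
    rw [intervalIntegral.integral_sub intervalIntegrable_const
      ((by fun_prop : Continuous fun α : ℝ => Real.cos (α * φ)).intervalIntegrable _ _),
      intervalIntegral.integral_comp_mul_right Real.cos hφ', intervalIntegral.integral_const]
    simp [integral_cos, smul_eq_mul]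
    field_simp
  rw [hsin, hcos]
  simp [Matrix.add_apply, Matrix.smul_apply, smul_eq_mul]
end
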